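/- Let Λ ≥ 1 and t ≤ Λ be natural numbers, and let L_1 ≥ L_2 ≥ … ≥ L_Λ be a nonincreasing sequence of natural numbers with Σ_{r=1}^{Λ} L_r = K. Then, as rational numbers, Σ_{r=1}^{Λ} L_r · C(Λ−r, t) ≥ (K/Λ) · C(Λ, t+1). -/

import Mathlib

/-!
Both `r ↦ L r` and `r ↦ C(Λ - r, t)` are nonincreasing on `{1, …, Λ}`, so Chebyshev's sum
inequality gives `K · Σ_r C(Λ - r, t) ≤ Λ · Σ_r L r · C(Λ - r, t)`, and the hockey-stick identity
evaluates `Σ_r C(Λ - r, t) = C(Λ, t + 1)`.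
-/

open Finset

theorem Nat.sum_range_choose_eq_choose_succ (n k : ℕ) :
    ∑ m ∈ range n, m.choose k = n.choose (k + 1) := by
  induction n with
  | zero => simp
  | succ n ih => rw [sum_range_succ, ih, Nat.choose_succ_succ', add_comm]

theorem Nat.sum_Icc_choose_sub (n k : ℕ) :
    ∑ r ∈ Icc 1 n, (n - r).choose k = n.choose (k + 1) := by
  rw [← Ico_add_one_right_eq_Icc, sum_Ico_reflect (·.choose k) 1 le_rfl, Nat.add_sub_cancel,
    Nat.sub_self, Nat.Ico_zero_eq_range, Nat.sum_range_choose_eq_choose_succ]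

theorem Nat.antitone_choose_sub (n k : ℕ) : Antitone fun r => (n - r).choose k :=
  fun _ _ h => Nat.choose_le_choose k (Nat.sub_le_sub_left h n)

theorem stmt_3_general (Λ t K : ℕ) (L : ℕ → ℕ)
    (hmono : ∀ i j, 1 ≤ i → i ≤ j → j ≤ Λ → L j ≤ L i)
    (hsum : ∑ r ∈ Finset.Icc 1 Λ, L r = K) :
    ((K : ℚ) / (Λ : ℚ)) * (Nat.choose Λ (t + 1) : ℚ)
      ≤ ∑ r ∈ Finset.Icc 1 Λ, (L r : ℚ) * (Nat.choose (Λ - r) t : ℚ) := by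
  have hL : AntitoneOn (fun r => (L r : ℚ)) (Icc 1 Λ) := by
    intro i hi j hj hij
    simp only [coe_Icc, Set.mem_Icc] at hi hj
    exact Nat.cast_le.mpr (hmono i j hi.1 hij hj.2)
  have hC : Antitone fun r => ((Λ - r).choose t : ℚ) :=
    Nat.mono_cast.comp_antitone (Nat.antitone_choose_sub Λ t)
  have cheb := (hL.monovaryOn (hC.antitoneOn _)).sum_mul_sum_le_card_mul_sum
  rw [← Nat.cast_sum, ← Nat.cast_sum, hsum, Nat.sum_Icc_choose_sub, Nat.card_Icc,
    Nat.add_sub_cancel] at cheb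
  rw [div_mul_eq_mul_div]
  exact div_le_of_le_mul₀ (Nat.cast_nonneg _) (by positivity) (by linarith)

/-- For a nonincreasing profile `L` on `{1,…,Λ}` with total `K`,
`Σ_{r=1}^{Λ} L r · C(Λ−r, t) ≥ (K/Λ) · C(Λ, t+1)` as rationals. -/
theorem stmt_3 (Λ t K : ℕ) (hΛ : 1 ≤ Λ) (ht : t ≤ Λ) (L : ℕ → ℕ)
    (hmono : ∀ i j, 1 ≤ i → i ≤ j → j ≤ Λ → L j ≤ L i)
    (hsum : ∑ r ∈ Finset.Icc 1 Λ, L r = K) :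
    ((K : ℚ) / (Λ : ℚ)) * (Nat.choose Λ (t + 1) : ℚ)
      ≤ ∑ r ∈ Finset.Icc 1 Λ, (L r : ℚ) * (Nat.choose (Λ - r) t : ℚ) :=
  stmt_3_general Λ t K L hmono hsum
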